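/- Let T = (D, M) be a thermodynamic binding network with d = |D| and m = |M|, and let a be the maximum number of instances of any single domain type (primary or complementary) occurring in any monomer type of M. Then for every monomer collection of T and every stable configuration α of that collection, every polymer of α has size at most 2(m + d)(ad)^{2d+3}. -/

import Mathlib

/-
Let `v` count the monomer types of a polymer `P` of a stable configuration and let `b = M v` be
its net excess of each domain type, `M` the monomer matrix. Then `(v, |b|)` is a non-negative
integer point in the kernel of `[M | -diag (sign b)]`, a matrix with `d` rows, `m + d` columns and
entries bounded by `a`. Peeling off small integer kernel points, whose size a Siegel-type
pigeonhole bounds by `(d + 1) ((a (d + 1)) ^ d - 1)`, writes it as a non-negative combination of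
at most `m + d` of them, so if `P` is large one of them, `u`, occurs with coefficient at least
one: then `0 ≠ u ≤ v`, `u ≠ v` and `M u` lies between `0` and `b` in every coordinate. Split `P`
into parts with type counts `u` and `v - u` and rematch each part maximally within itself. Since
the two parts have excesses of the same sign in every domain, the result is still saturated, but
`P` has fallen apart into two polymers, contradicting stability.
-/

/-- A monomer type over a set `D` of primary domain types: for each primary
domain type it records the number of instances of that domain and of its
complementary (starred) domain on the monomer. -/
structure Monomer (D : Type) where
  prim : D → ℕ
  star : D → ℕ

/-- Instances of primary domains in the monomer collection `mon : I → Monomer D`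
(`I` indexes the individual monomers). -/
def PrimInst {D I : Type} (mon : I → Monomer D) : Type :=
  Σ i : I, Σ x : D, Fin ((mon i).prim x)

/-- Instances of complementary (starred) domains in the collection `mon`. -/
def StarInst {D I : Type} (mon : I → Monomer D) : Type :=
  Σ i : I, Σ x : D, Fin ((mon i).star x)

/-- A configuration of the monomer collection `mon`: a matching between primary
domain instances and complementary domain instances of the same domain type. -/
structure Config {D I : Type} (mon : I → Monomer D) where
  bond : PrimInst mon → Option (StarInst mon)
  inj : ∀ p q s, bond p = some s → bond q = some s → p = q
  compat : ∀ p s, bond p = some s → p.2.1 = s.2.1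

namespace Config

variable {D I : Type} {mon : I → Monomer D}

/-- A configuration is saturated if no primary domain instance of some type and
complementary instance of the same type are both unmatched. -/
def Saturated (α : Config mon) : Prop :=
  ¬ ∃ (p : PrimInst mon) (s : StarInst mon),
      p.2.1 = s.2.1 ∧ α.bond p = none ∧ ∀ q, α.bond q ≠ some s

/-- The monomer binding graph: vertices are monomers, with an edge between two
(distinct) monomers that share at least one bound pair of domain instances.
Its connected components are the polymers of the configuration. -/
def bindingGraph (α : Config mon) : SimpleGraph I where
  Adj i j := i ≠ j ∧ ∃ p s, α.bond p = some s ∧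
      ((p.1 = i ∧ s.1 = j) ∨ (p.1 = j ∧ s.1 = i))
  symm := by
    constructor
    rintro i j ⟨hne, p, s, hb, hor⟩
    exact ⟨hne.symm, p, s, hb, hor.symm⟩
  loopless := by
    constructor
    rintro i ⟨hne, -⟩
    exact hne rfl

/-- The entropy `S(α)`: the number of polymers (connected components). -/
noncomputable def entropy (α : Config mon) : ℕ :=
  Nat.card α.bindingGraph.ConnectedComponent

/-- A configuration is stable if it is saturated and has maximal entropy among
all saturated configurations of the same monomer collection. -/
def IsStable (α : Config mon) : Prop :=
  α.Saturated ∧ ∀ β : Config mon, β.Saturated → β.entropy ≤ α.entropy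

/-- The size of a polymer (connected component) `C`: the number of monomers in it. -/
noncomputable def polymerSize (α : Config mon) (C : α.bindingGraph.ConnectedComponent) : ℕ :=
  Nat.card {i : I // α.bindingGraph.connectedComponentMk i = C}

/-- A monomer is free if its polymer contains no other monomer. -/
def Free (α : Config mon) (i : I) : Prop :=
  ∀ j : I, α.bindingGraph.Reachable i j → j = i

end Config

/-- The monomer matrix `M_T` applied to a count vector `c`: component `x` is the
number of instances of domain `x` minus the number of instances of `x*` in the
collection with `c j` copies of monomer type `Mty j`. -/
def matVec {D : Type} {m : ℕ} (Mty : Fin m → Monomer D) (c : Fin m → ℕ) (x : D) : ℤ :=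
  ∑ j, (c j : ℤ) * (((Mty j).prim x : ℤ) - ((Mty j).star x : ℤ))

open Finset Function Matrix Submodule Module

section Siegel

variable {κ ρ σ : Type*} [Fintype σ]

lemma mul_sub_min_mul_mem_Icc {c z : ℤ} {a B : ℕ} (hc : |c| ≤ a) (hz0 : 0 ≤ z) (hzB : z ≤ B) :
    c * z - min c 0 * B ∈ Set.Icc 0 (a * B : ℤ) := by
  rcases le_total c 0 with h | h
  · rw [min_eq_left h, abs_of_nonpos h] at *
    constructor <;> nlinarith
  · rw [min_eq_right h, abs_of_nonneg h] at *
    constructor <;> nlinarith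

/-- Pigeonhole: each coordinate of `A *ᵥ z`, for `z` in the box `{0, …, K - 1} ^ σ`, ranges over
an interval of `card σ * a * (K - 1) + 1` integers. -/
theorem Matrix.exists_ne_mulVec_eq_of_card_lt [Fintype κ] (A : Matrix κ σ ℤ) {a K : ℕ}
    (ha : ∀ i j, |A i j| ≤ a)
    (hK : (Fintype.card σ * a * (K - 1) + 1) ^ Fintype.card κ < K ^ Fintype.card σ) :
    ∃ z₁ z₂ : σ → Fin K, z₁ ≠ z₂ ∧
      A *ᵥ (fun j => (z₁ j : ℤ)) = A *ᵥ (fun j => (z₂ j : ℤ)) := by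
  classical
  set n := Fintype.card σ
  set B := K - 1
  let lo : κ → ℤ := fun k => ∑ j, min (A k j) 0 * B
  let t := Fintype.piFinset fun k => Finset.Icc (lo k) (lo k + (n * a * B : ℕ))
  have hmaps : ∀ z ∈ (univ : Finset (σ → Fin K)), A *ᵥ (fun j => (z j : ℤ)) ∈ t := by
    intro z _
    rw [Fintype.mem_piFinset]
    intro k
    have hterm : ∀ j, A k j * (z j : ℤ) - min (A k j) 0 * B ∈ Set.Icc 0 (a * B : ℤ) :=
      fun j => mul_sub_min_mul_mem_Icc (ha _ _) (by positivity) (by have := (z j).isLt; omega)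
    have h0 := Finset.sum_nonneg fun j (_ : j ∈ univ) => (hterm j).1
    have h1 := Finset.sum_le_sum fun j (_ : j ∈ univ) => (hterm j).2
    simp only [Finset.sum_sub_distrib, sum_const, card_univ, nsmul_eq_mul] at h0 h1
    rw [Finset.mem_Icc]
    constructor <;> simp only [mulVec, dotProduct] <;> push_cast at h1 ⊢ <;> nlinarith
  have hcard : #t < #(univ : Finset (σ → Fin K)) := by
    have hIcc : ∀ k, #(Finset.Icc (lo k) (lo k + (n * a * B : ℕ))) = n * a * B + 1 := fun k => by
      rw [Int.card_Icc]; omega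
    simpa only [t, Fintype.card_piFinset, hIcc, prod_const, card_univ, Fintype.card_fun,
      Fintype.card_fin] using hK
  obtain ⟨z₁, -, z₂, -, hne, heq⟩ := exists_ne_map_eq_of_card_lt_of_maps_to hcard hmaps
  exact ⟨z₁, z₂, hne, heq⟩

theorem Matrix.exists_ne_zero_mulVec_eq_zero_abs_lt [Finite ρ] (A : Matrix ρ σ ℤ) {a K : ℕ}
    (ha : ∀ i j, |A i j| ≤ a) (hrank : (A.map (Int.cast : ℤ → ℚ)).rank < Fintype.card σ)
    (hK : (Fintype.card σ * a * (K - 1) + 1) ^ (Fintype.card σ - 1) < K ^ Fintype.card σ) :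
    ∃ y : σ → ℤ, y ≠ 0 ∧ A *ᵥ y = 0 ∧ ∀ j, |y j| < K := by
  obtain ⟨κ, sel, hsel, hspan, hli⟩ := exists_linearIndependent' ℚ (A.map (Int.cast : ℤ → ℚ)).row
  have : Finite κ := Finite.of_injective sel hsel
  have := Fintype.ofFinite κ
  have hκ : Fintype.card κ ≤ Fintype.card σ - 1 := by
    have := finrank_span_eq_card hli
    rw [hspan, ← rank_eq_finrank_span_row] at this
    omega
  -- only a basis of the row space has to be matched by the pigeonhole
  obtain ⟨z₁, z₂, hne, heq⟩ := (A.submatrix sel id).exists_ne_mulVec_eq_of_card_lt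
    (fun i j => ha _ _) (lt_of_le_of_lt (Nat.pow_le_pow_right (by omega) hκ) hK)
  set y : σ → ℤ := fun j => z₁ j - z₂ j
  have hrows : ∀ w ∈ span ℚ (Set.range (A.map (Int.cast : ℤ → ℚ)).row),
      w ⬝ᵥ (fun j => (y j : ℚ)) = 0 := by
    rw [← hspan]
    intro w hw
    induction hw using Submodule.span_induction with
    | mem w hw =>
      obtain ⟨k, rfl⟩ := hw
      have := congrFun heq k
      simp only [mulVec, dotProduct, submatrix_apply, id] at this
      change ∑ j, (A (sel k) j : ℚ) * (y j : ℚ) = 0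
      simp only [y, Int.cast_sub, mul_sub, Finset.sum_sub_distrib]
      exact_mod_cast sub_eq_zero.mpr this
    | zero => exact zero_dotProduct _
    | add x y _ _ hx hy => rw [add_dotProduct, hx, hy, add_zero]
    | smul c x _ hx => rw [smul_dotProduct, hx, smul_zero]
  refine ⟨y, fun h => hne (funext fun j => Fin.ext ?_), funext fun i => ?_, fun j => ?_⟩
  · have := congrFun h j
    simp only [y, Pi.zero_apply, sub_eq_zero] at this
    exact_mod_cast this
  · have := hrows _ (subset_span (Set.mem_range_self i))
    simp only [row, map_apply, dotProduct] at this
    simp only [mulVec, dotProduct, Pi.zero_apply]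
    exact_mod_cast this
  · have := (z₁ j).isLt
    have := (z₂ j).isLt
    rw [abs_lt]
    constructor <;> simp only [y] <;> omega

lemma mul_add_one_pow_pred_lt_pow {a d n : ℕ} (ha : 1 ≤ a) (hd : 1 ≤ d) (hn : 1 ≤ n)
    (hnd : n ≤ d + 1) :
    (n * a * ((a * (d + 1)) ^ d - 1) + 1) ^ (n - 1) < ((a * (d + 1)) ^ d) ^ n := by
  set K := (a * (d + 1)) ^ d
  have hK : 2 ≤ K := calc
    2 ≤ a * (d + 1) := by nlinarith
    _ ≤ K := Nat.le_self_pow (by omega) _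
  obtain rfl | hn2 : n = 1 ∨ 2 ≤ n := by omega
  · simp only [one_mul, tsub_self, pow_zero, pow_one]; omega
  have hna : 2 ≤ n * a := by nlinarith
  calc (n * a * (K - 1) + 1) ^ (n - 1) < (n * a * K) ^ (n - 1) := by
        apply Nat.pow_lt_pow_left _ (by omega)
        have := Nat.mul_sub_one (n * a) K
        have : n * a ≤ n * a * K := Nat.le_mul_of_pos_right _ (by omega)
        omega
    _ = (n * a) ^ (n - 1) * K ^ (n - 1) := mul_pow _ _ _
    _ ≤ K * K ^ (n - 1) := by
        gcongr
        calc (n * a) ^ (n - 1) ≤ (a * (d + 1)) ^ (n - 1) := Nat.pow_le_pow_left (by nlinarith) _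
          _ ≤ K := Nat.pow_le_pow_right (by nlinarith) (by omega)
    _ = K ^ n := by rw [← pow_succ']; congr 1; omega

end Siegel

section KernelCone

variable {ρ γ : Type*} [Fintype γ]

lemma Matrix.map_intCast_mulVec (A : Matrix ρ γ ℤ) (y : γ → ℤ) :
    A.map (Int.cast : ℤ → ℚ) *ᵥ (fun j => (y j : ℚ)) = fun i => ((A *ᵥ y) i : ℚ) :=
  funext fun i => (RingHom.map_mulVec (Int.castRingHom ℚ) A y i).symm

lemma Matrix.mulVec_eq_submatrix_mulVec {R : Type*} [NonUnitalNonAssocSemiring R]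
    (A : Matrix ρ γ R) {S : Finset γ} {v : γ → R} (hv : ∀ j ∉ S, v j = 0) :
    A *ᵥ v = A.submatrix id ((↑) : S → γ) *ᵥ (v ∘ (↑)) := by
  ext i
  simp only [mulVec, dotProduct, submatrix_apply, id]
  rw [← Finset.sum_subset (subset_univ S) fun j _ hj => by rw [hv j hj, mul_zero]]
  exact (Finset.sum_coe_sort S _).symm

lemma Matrix.rank_lt_card_width_of_mulVec_eq_zero {K : Type*} [Field K] (A : Matrix ρ γ K)
    {v : γ → K} (hv : v ≠ 0) (hAv : A *ᵥ v = 0) : A.rank < Fintype.card γ := by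
  have hker : LinearMap.ker A.mulVecLin ≠ ⊥ := fun h =>
    hv (ker_mulVecLin_eq_bot_iff.mp h v hAv)
  have := LinearMap.finrank_range_add_finrank_ker A.mulVecLin
  rw [Module.finrank_fintype_fun_eq_card] at this
  have := Submodule.one_le_finrank_iff.mpr hker
  unfold Matrix.rank
  omega

theorem Matrix.exists_int_mulVec_eq_zero_natAbs_le [Finite ρ] (A : Matrix ρ γ ℤ) {a d : ℕ}
    (hd1 : 1 ≤ d) (ha1 : 1 ≤ a) (ha : ∀ i j, |A i j| ≤ a) {S : Finset γ} (hS : S.card ≤ d + 1)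
    (hrank : ((A.submatrix id ((↑) : S → γ)).map (Int.cast : ℤ → ℚ)).rank < S.card) :
    ∃ y : γ → ℤ, y ≠ 0 ∧ A *ᵥ y = 0 ∧ (∀ j ∉ S, y j = 0) ∧
      ∑ j, (y j).natAbs ≤ (d + 1) * ((a * (d + 1)) ^ d - 1) := by
  classical
  rw [← Fintype.card_coe] at hrank hS
  obtain ⟨w, hw0, hwker, hwK⟩ :=
    (A.submatrix id ((↑) : S → γ)).exists_ne_zero_mulVec_eq_zero_abs_lt (fun i j => ha _ _) hrank
      (mul_add_one_pow_pred_lt_pow ha1 hd1 (Nat.one_le_iff_ne_zero.2 (by omega)) hS)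
  set y : γ → ℤ := fun j => if h : j ∈ S then w ⟨j, h⟩ else 0
  have hyS : y ∘ (↑) = w := funext fun j => dif_pos j.2
  have hy0 : ∀ j ∉ S, y j = 0 := fun j hj => dif_neg hj
  refine ⟨y, fun h => hw0 (by rw [← hyS, h]; rfl), ?_, hy0, ?_⟩
  · rw [A.mulVec_eq_submatrix_mulVec hy0, hyS, hwker]
  · rw [← Finset.sum_subset (subset_univ S) fun j _ hj => by rw [hy0 j hj, Int.natAbs_zero],
      ← Finset.sum_coe_sort S]
    calc ∑ j : S, (y j).natAbs ≤ ∑ _j : S, ((a * (d + 1)) ^ d - 1) := by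
          refine Finset.sum_le_sum fun j _ => ?_
          have := hwK j
          rw [← hyS] at this
          change |y j| < _ at this
          rw [Int.abs_eq_natAbs] at this
          omega
      _ ≤ (d + 1) * ((a * (d + 1)) ^ d - 1) := by
          rw [sum_const, card_univ, smul_eq_mul]
          exact Nat.mul_le_mul_right _ hS

lemma Matrix.exists_subset_support_rank_lt [Fintype ρ] (A : Matrix ρ γ ℤ) {d : ℕ}
    (hd : Fintype.card ρ = d) {x : γ → ℚ} (hx : x ≠ 0)
    (hker : A.map (Int.cast : ℤ → ℚ) *ᵥ x = 0) :
    ∃ S : Finset γ, ↑S ⊆ support x ∧ S.card ≤ d + 1 ∧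
      ((A.submatrix id ((↑) : S → γ)).map (Int.cast : ℤ → ℚ)).rank < S.card := by
  classical
  by_cases hT : d + 1 ≤ (support x).toFinset.card
  · obtain ⟨S, hST, hS⟩ := exists_subset_card_eq hT
    refine ⟨S, fun j hj => by simpa using hST hj, hS.le, ?_⟩
    calc _ ≤ Fintype.card ρ := rank_le_card_height _
      _ < S.card := by omega
  · refine ⟨(support x).toFinset, by simp, by omega, ?_⟩
    rw [← Fintype.card_coe]
    refine rank_lt_card_width_of_mulVec_eq_zero _ (v := x ∘ (↑)) ?_ ?_
    · obtain ⟨j, hj⟩ := Function.ne_iff.mp hx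
      exact Function.ne_iff.mpr ⟨⟨j, by simpa using hj⟩, hj⟩
    · rw [← submatrix_map, ← mulVec_eq_submatrix_mulVec _ (by simp), hker]

lemma exists_pos_nonneg_sub_smul_support_ssubset {𝕜 : Type*} [Field 𝕜] [LinearOrder 𝕜]
    [IsStrictOrderedRing 𝕜] {x w : γ → 𝕜} (hx : 0 ≤ x) (hw : support w ⊆ support x)
    (hpos : ∃ j, 0 < w j) :
    ∃ t : 𝕜, 0 < t ∧ 0 ≤ x - t • w ∧ support (x - t • w) ⊂ support x := by
  classical
  set P := univ.filter fun j => 0 < w j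
  have hP : P.Nonempty := let ⟨j, hj⟩ := hpos; ⟨j, by simpa [P]⟩
  obtain ⟨j₀, hj₀, ht⟩ := exists_mem_eq_inf' hP fun j => x j / w j
  set t := P.inf' hP fun j => x j / w j
  have hwj₀ : 0 < w j₀ := (mem_filter.1 hj₀).2
  have hxj₀ : 0 < x j₀ := lt_of_le_of_ne (hx j₀) (Ne.symm (hw (ne_of_gt hwj₀)))
  have ht0 : 0 < t := by rw [ht]; positivity
  have hle : ∀ j, 0 < w j → t * w j ≤ x j := fun j hj =>
    (le_div_iff₀ hj).1 (inf'_le _ (by simpa [P]))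
  refine ⟨t, ht0, fun j => ?_, (Set.ssubset_iff_of_subset fun j hj => ?_).2 ⟨j₀, hxj₀.ne', ?_⟩⟩
  · simp only [Pi.zero_apply, Pi.sub_apply, Pi.smul_apply, smul_eq_mul, sub_nonneg]
    rcases lt_or_ge 0 (w j) with h | h
    · exact hle j h
    · have hxj : 0 ≤ x j := hx j
      nlinarith [mul_nonpos_of_nonneg_of_nonpos ht0.le h]
  · contrapose! hj
    have : w j = 0 := by_contra fun h => hj (hw h)
    simp [show x j = 0 from by simpa using hj, this]
  · simp only [mem_support, Pi.sub_apply, Pi.smul_apply, smul_eq_mul, not_not, ht]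
    field_simp
    ring

/-- Moving `x` along `-y` until a coordinate vanishes. -/
lemma Matrix.exists_support_ssubset_of_sign_change (A : Matrix ρ γ ℤ) {x : γ → ℚ} (hx0 : 0 ≤ x)
    (hker : A.map (Int.cast : ℤ → ℚ) *ᵥ x = 0) {y : γ → ℤ} (hyker : A *ᵥ y = 0)
    (hyx : support y ⊆ support x) (hpos : ∃ j, 0 < y j) (hneg : ∃ j, y j < 0) :
    ∃ x' : γ → ℚ, 0 ≤ x' ∧ x' ≠ 0 ∧ A.map (Int.cast : ℤ → ℚ) *ᵥ x' = 0 ∧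
      support x' ⊂ support x := by
  obtain ⟨t, ht, hnn, hss⟩ := exists_pos_nonneg_sub_smul_support_ssubset hx0
    (w := fun j => (y j : ℚ)) (by simpa using hyx) (by simpa using hpos)
  refine ⟨_, hnn, ?_, ?_, hss⟩
  · obtain ⟨j, hj⟩ := hneg
    have : t * (y j : ℚ) < 0 := mul_neg_of_pos_of_neg ht (by exact_mod_cast hj)
    have hxj : 0 ≤ x j := hx0 j
    refine Function.ne_iff.mpr ⟨j, ?_⟩
    simp only [Pi.sub_apply, Pi.smul_apply, smul_eq_mul, Pi.zero_apply]
    linarith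
  · rw [mulVec_sub, mulVec_smul, hker, map_intCast_mulVec, hyker]
    ext; simp

def Matrix.HasSmallKernelPoints (A : Matrix ρ γ ℤ) (R : ℕ) : Prop :=
  ∀ x : γ → ℚ, 0 ≤ x → x ≠ 0 → A.map (Int.cast : ℤ → ℚ) *ᵥ x = 0 →
    ∃ y : γ → ℕ, y ≠ 0 ∧ A *ᵥ (fun j => (y j : ℤ)) = 0 ∧ support y ⊆ support x ∧ ∑ j, y j ≤ R

theorem Matrix.hasSmallKernelPoints_of_abs_le [Fintype ρ] (A : Matrix ρ γ ℤ) {a d : ℕ}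
    (hd : Fintype.card ρ = d) (hd1 : 1 ≤ d) (ha1 : 1 ≤ a) (ha : ∀ i j, |A i j| ≤ a) :
    A.HasSmallKernelPoints ((d + 1) * ((a * (d + 1)) ^ d - 1)) := by
  intro x hx0 hx hker
  induction hN : (support x).ncard using Nat.strong_induction_on generalizing x with
  | _ N ih =>
  obtain ⟨S, hSx, hSd, hrank⟩ := A.exists_subset_support_rank_lt hd hx hker
  obtain ⟨y, hy0, hyker, hyS, hysum⟩ := A.exists_int_mulVec_eq_zero_natAbs_le hd1 ha1 ha hSd hrank
  have hyx : support y ⊆ support x := fun j hj => hSx (by_contra fun h => hj (hyS j h))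
  wlog hpos : ∃ j, 0 < y j generalizing y
  · push Not at hpos
    obtain ⟨j, hj⟩ := Function.ne_iff.mp hy0
    refine this (-y) (neg_ne_zero.2 hy0) (by rw [mulVec_neg, hyker, neg_zero])
      (fun j hj => by simp [hyS j hj]) (by simpa using hysum) (by simpa using hyx)
      ⟨j, by have := hpos j; simp only [Pi.neg_apply, Pi.zero_apply] at hj ⊢; omega⟩
  by_cases hneg : ∃ j, y j < 0
  · obtain ⟨x', hx'0, hx', hker', hss⟩ :=
      A.exists_support_ssubset_of_sign_change hx0 hker hyker hyx hpos hneg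
    obtain ⟨y', hy'0, hy'ker, hy'x, hy'sum⟩ :=
      ih _ (hN ▸ Set.ncard_lt_ncard hss) _ hx'0 hx' hker' rfl
    exact ⟨y', hy'0, hy'ker, hy'x.trans hss.subset, hy'sum⟩
  · push Not at hneg
    refine ⟨fun j => (y j).toNat, ?_, ?_, ?_, ?_⟩
    · obtain ⟨j, hj⟩ := hpos
      refine Function.ne_iff.mpr ⟨j, ?_⟩
      simp only [Pi.zero_apply, ne_eq, Int.toNat_eq_zero, not_le]
      omega
    · rw [← hyker]; congr; ext j; simp [hneg j]
    · refine fun j hj => hyx ?_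
      simp only [mem_support, ne_eq, Int.toNat_eq_zero, not_le] at hj ⊢
      omega
    · refine le_trans (Finset.sum_le_sum fun j _ => ?_) hysum
      omega

end KernelCone

namespace Matrix.HasSmallKernelPoints

variable {ρ γ : Type*} [Fintype γ] {A : Matrix ρ γ ℤ} {R : ℕ}

theorem exists_sub_smul (hA : A.HasSmallKernelPoints R) {x : γ → ℚ} (hx0 : 0 ≤ x) (hx : x ≠ 0)
    (hker : A.map (Int.cast : ℤ → ℚ) *ᵥ x = 0) :
    ∃ (y : γ → ℕ) (t : ℚ), y ≠ 0 ∧ A *ᵥ (fun j => (y j : ℤ)) = 0 ∧ ∑ j, y j ≤ R ∧ 0 < t ∧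
      0 ≤ x - t • (fun j => (y j : ℚ)) ∧
      A.map (Int.cast : ℤ → ℚ) *ᵥ (x - t • fun j => (y j : ℚ)) = 0 ∧
      support (x - t • fun j => (y j : ℚ)) ⊂ support x := by
  obtain ⟨y, hy0, hyker, hyx, hyR⟩ := hA x hx0 hx hker
  obtain ⟨t, ht, hnn, hss⟩ := exists_pos_nonneg_sub_smul_support_ssubset hx0
    (w := fun j => (y j : ℚ)) (by simpa using hyx)
    (let ⟨j, hj⟩ := Function.ne_iff.mp hy0; ⟨j, Nat.cast_pos.2 (Nat.pos_of_ne_zero hj)⟩)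
  refine ⟨y, t, hy0, hyker, hyR, ht, hnn, ?_, hss⟩
  have := map_intCast_mulVec A (fun j => y j)
  simp only [Int.cast_natCast, hyker] at this
  rw [mulVec_sub, mulVec_smul, hker, this]
  ext; simp

/-- Peeling small kernel points off `x` one at a time, with the largest coefficient recorded:
`x` has at most `#(support x)` pieces, each of coordinate sum at most `R`. -/
theorem exists_smul_le (hA : A.HasSmallKernelPoints R) {x : γ → ℚ} (hx0 : 0 ≤ x) (hx : x ≠ 0)
    (hker : A.map (Int.cast : ℤ → ℚ) *ᵥ x = 0) :
    ∃ (y : γ → ℕ) (c : ℚ), y ≠ 0 ∧ A *ᵥ (fun j => (y j : ℤ)) = 0 ∧ ∑ j, y j ≤ R ∧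
      (∀ j, c * y j ≤ x j) ∧ ∑ j, x j ≤ (support x).ncard * R * c := by
  induction hN : (support x).ncard using Nat.strong_induction_on generalizing x with
  | _ N ih =>
  obtain ⟨y, t, hy0, hyker, hyR, ht, hnn, hker', hss⟩ := hA.exists_sub_smul hx0 hx hker
  set x' := x - t • fun j => (y j : ℚ)
  have hsum : ∑ j, x j = t * ∑ j, (y j : ℚ) + ∑ j, x' j := by
    simp only [x', Pi.sub_apply, Pi.smul_apply, smul_eq_mul, Finset.sum_sub_distrib,
      Finset.mul_sum]
    ring
  have htyR : t * ∑ j, (y j : ℚ) ≤ t * R := by gcongr; exact_mod_cast hyR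
  have hx'x : ∀ j, t * y j + x' j = x j := fun j => by simp [x']
  have hty : ∀ j, t * y j ≤ x j := fun j => by
    have : 0 ≤ x' j := hnn j
    linarith [hx'x j]
  have hN1 : 1 ≤ N := hN ▸ (Set.ncard_pos (Set.toFinite _)).2 (support_nonempty_iff.mpr hx)
  have hR : (0 : ℚ) ≤ R := by positivity
  by_cases hx' : x' = 0
  · refine ⟨y, t, hy0, hyker, hyR, hty, ?_⟩
    rw [hsum, hx', Pi.zero_def, Finset.sum_const_zero, add_zero]
    calc t * ∑ j, (y j : ℚ) ≤ 1 * R * t := by linarith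
      _ ≤ N * R * t := by gcongr; exact_mod_cast hN1
  obtain ⟨y', c', hy'0, hy'ker, hy'R, hy'x, hsum'⟩ :=
    ih _ (hN ▸ Set.ncard_lt_ncard hss) hnn hx' hker' rfl
  have hN' : ((support x').ncard : ℚ) + 1 ≤ N := by
    exact_mod_cast hN ▸ Set.ncard_lt_ncard hss
  rcases le_total c' t with hc | hc
  · refine ⟨y, t, hy0, hyker, hyR, hty, ?_⟩
    calc ∑ j, x j ≤ t * R + (support x').ncard * R * t := by
          rw [hsum]; gcongr; exact hsum'.trans (by gcongr)
      _ = ((support x').ncard + 1) * R * t := by ring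
      _ ≤ N * R * t := by gcongr
  · refine ⟨y', c', hy'0, hy'ker, hy'R, fun j => ?_, ?_⟩
    · have : (0 : ℚ) ≤ t * y j := by positivity
      linarith [hy'x j, hx'x j]
    · calc ∑ j, x j ≤ c' * R + (support x').ncard * R * c' := by
            rw [hsum]
            exact add_le_add (htyR.trans (mul_le_mul_of_nonneg_right hc hR)) hsum'
      _ = ((support x').ncard + 1) * R * c' := by ring
      _ ≤ N * R * c' := by gcongr; linarith

theorem exists_le_ne (hA : A.HasSmallKernelPoints R) {x : γ → ℕ}
    (hker : A *ᵥ (fun j => (x j : ℤ)) = 0) (hbig : Fintype.card γ * R < ∑ j, x j) :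
    ∃ u : γ → ℕ, u ≤ x ∧ u ≠ 0 ∧ u ≠ x ∧ A *ᵥ (fun j => (u j : ℤ)) = 0 := by
  have hx : (fun j => (x j : ℚ)) ≠ 0 := fun h => by
    simp only [funext_iff, Pi.zero_apply, Nat.cast_eq_zero] at h
    simp [h] at hbig
  have hkerℚ : A.map (Int.cast : ℤ → ℚ) *ᵥ (fun j => (x j : ℚ)) = 0 := by
    have := map_intCast_mulVec A (fun j => x j)
    simp only [Int.cast_natCast, hker] at this
    rw [this]; rfl
  obtain ⟨y, c, hy0, hyker, hyR, hyx, hsum⟩ := hA.exists_smul_le (fun j => by simp) hx hkerℚ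
  have hγ : (support fun j => (x j : ℚ)).ncard ≤ Fintype.card γ :=
    (Set.ncard_le_card _).trans (Nat.card_eq_fintype_card).le
  have hc : 1 < c := by
    by_contra! hc
    have : (∑ j, x j : ℚ) ≤ Fintype.card γ * R := calc
      _ ≤ _ := hsum
      _ ≤ (support fun j => (x j : ℚ)).ncard * R * 1 := by gcongr
      _ ≤ _ := by rw [mul_one]; gcongr
    have : (Fintype.card γ * R : ℚ) < ∑ j, (x j : ℚ) := by exact_mod_cast hbig
    linarith
  refine ⟨y, fun j => ?_, hy0, fun h => ?_, hyker⟩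
  · have : (y j : ℚ) ≤ x j := by nlinarith [hyx j, (Nat.cast_nonneg (y j) : (0 : ℚ) ≤ y j)]
    exact_mod_cast this
  · have : 1 ≤ Fintype.card γ := Fintype.card_pos_iff.mpr
      (let ⟨j, _⟩ := Function.ne_iff.mp hy0; ⟨j⟩)
    rw [h] at hyR
    nlinarith

end Matrix.HasSmallKernelPoints

lemma mem_uIcc_of_add_mul_eq_zero {e b : ℤ} {w : ℕ} (hw : w ≤ b.natAbs)
    (h : e + (if 0 ≤ b then -1 else 1) * w = 0) : e ∈ Set.uIcc 0 b ∧ |e| = w := by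
  rw [Set.mem_uIcc]
  split_ifs at h with hb
  · exact ⟨by omega, by rw [abs_of_nonneg] <;> omega⟩
  · exact ⟨by omega, by rw [abs_of_nonpos] <;> omega⟩

section Slack

variable {ρ ι : Type*} [DecidableEq ρ]

/-- `M` with the slack columns `∓ eᵢ` appended, signed against `b`: for `b = M v` this turns
"`M u` lies between `0` and `b`" into a kernel condition. -/
def Matrix.withSlack (M : Matrix ρ ι ℤ) (b : ρ → ℤ) : Matrix ρ (ι ⊕ ρ) ℤ :=
  fromCols M (diagonal fun i => if 0 ≤ b i then -1 else 1)

lemma Matrix.abs_withSlack_le {M : Matrix ρ ι ℤ} {a : ℕ} (ha1 : 1 ≤ a) (hM : ∀ i j, |M i j| ≤ a)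
    (b : ρ → ℤ) (i : ρ) (j : ι ⊕ ρ) : |M.withSlack b i j| ≤ a := by
  rcases j with j | k
  · exact hM i j
  · simp only [withSlack, fromCols_apply_inr, diagonal_apply]
    split_ifs <;>
      simp only [abs_neg, abs_one, abs_zero, Nat.one_le_cast, Nat.cast_nonneg] <;> omega

variable [Fintype ρ] [Fintype ι]

lemma Matrix.withSlack_mulVec_apply (M : Matrix ρ ι ℤ) (b : ρ → ℤ) (w : ι ⊕ ρ → ℕ) (i : ρ) :
    (M.withSlack b *ᵥ fun j => (w j : ℤ)) i =
      (M *ᵥ fun j => (w (.inl j) : ℤ)) i + (if 0 ≤ b i then -1 else 1) * w (.inr i) := by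
  simp only [withSlack, fromCols_mulVec, Pi.add_apply, mulVec_diagonal, Function.comp_apply]
  rfl

theorem Matrix.exists_nat_le_mulVec_mem_uIcc (M : Matrix ρ ι ℤ) {a d : ℕ}
    (hd : Fintype.card ρ = d) (hd1 : 1 ≤ d) (ha1 : 1 ≤ a) (hM : ∀ i j, |M i j| ≤ a) (v : ι → ℕ)
    (hv : (Fintype.card ι + d) * ((d + 1) * ((a * (d + 1)) ^ d - 1)) < ∑ j, v j) :
    ∃ u : ι → ℕ, u ≤ v ∧ u ≠ 0 ∧ u ≠ v ∧
      ∀ i, (M *ᵥ fun j => (u j : ℤ)) i ∈ Set.uIcc 0 ((M *ᵥ fun j => (v j : ℤ)) i) := by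
  set b := M *ᵥ fun j => (v j : ℤ)
  set x : ι ⊕ ρ → ℕ := Sum.elim v fun i => (b i).natAbs
  have hx : M.withSlack b *ᵥ (fun j => (x j : ℤ)) = 0 := funext fun i => by
    rw [withSlack_mulVec_apply]
    simp only [x, Sum.elim_inl, Sum.elim_inr, Pi.zero_apply]
    change b i + _ = 0
    split_ifs <;> omega
  have hbig : Fintype.card (ι ⊕ ρ) * ((d + 1) * ((a * (d + 1)) ^ d - 1)) < ∑ j, x j := by
    rw [Fintype.card_sum, hd, Fintype.sum_sum_type]
    exact hv.trans_le (Nat.le_add_right _ _)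
  have hA := (M.withSlack b).hasSmallKernelPoints_of_abs_le hd hd1 ha1 (abs_withSlack_le ha1 hM b)
  obtain ⟨u, hux, hu0, hux', huker⟩ := hA.exists_le_ne hx hbig
  have hu : ∀ i, (M *ᵥ fun j => (u (.inl j) : ℤ)) i ∈ Set.uIcc 0 (b i) ∧
      |(M *ᵥ fun j => (u (.inl j) : ℤ)) i| = u (.inr i) := fun i =>
    mem_uIcc_of_add_mul_eq_zero (hux (.inr i)) (by rw [← withSlack_mulVec_apply, huker]; rfl)
  refine ⟨fun j => u (.inl j), fun j => hux _, fun h => hu0 ?_, fun h => hux' ?_,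
    fun i => (hu i).1⟩
  · ext (j | i)
    · exact congrFun h j
    · have := (hu i).2
      have h' : ∀ j, u (.inl j) = 0 := congrFun h
      simp only [h', Nat.cast_zero] at this
      rw [show (fun _ : ι => (0 : ℤ)) = 0 from rfl, mulVec_zero] at this
      simp only [Pi.zero_apply]
      simp only [Pi.zero_apply, abs_zero] at this
      omega
  · ext (j | i)
    · exact congrFun h j
    · have := (hu i).2
      have h' : ∀ j, u (.inl j) = v j := congrFun h
      simp only [h'] at this
      change |b i| = _ at this
      rw [Int.abs_eq_natAbs] at this
      simp only [x, Sum.elim_inr]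
      omega

end Slack

lemma succ_mul_pow_sub_one_le {a d : ℕ} (ha : 1 ≤ a) (hd : 1 ≤ d) :
    (d + 1) * ((a * (d + 1)) ^ d - 1) ≤ 2 * (a * d) ^ (2 * d + 3) := by
  obtain rfl | hd2 : d = 1 ∨ 2 ≤ d := by omega
  · have : 2 * a - 1 ≤ a ^ 2 := by
      obtain ⟨k, rfl⟩ : ∃ k, a = k + 1 := ⟨a - 1, by omega⟩
      ring_nf; omega
    calc (1 + 1) * ((a * (1 + 1)) ^ 1 - 1) = 2 * (2 * a - 1) := by ring_nf
      _ ≤ 2 * a ^ 5 := by gcongr; exact this.trans (Nat.pow_le_pow_right ha (by norm_num))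
      _ = 2 * (a * 1) ^ (2 * 1 + 3) := by ring
  have had : 1 ≤ a * d := by nlinarith
  calc (d + 1) * ((a * (d + 1)) ^ d - 1) ≤ (2 * (a * d) ^ 3) * ((a * d) ^ 2) ^ d := by
        gcongr
        · calc d + 1 ≤ 2 * (a * d) := by nlinarith
            _ ≤ 2 * (a * d) ^ 3 := by gcongr; exact Nat.le_self_pow (by norm_num) _
        · calc (a * (d + 1)) ^ d - 1 ≤ (a * (d + 1)) ^ d := Nat.sub_le _ _
            _ ≤ ((a * d) ^ 2) ^ d := by gcongr; nlinarith
    _ = 2 * (a * d) ^ (2 * d + 3) := by ring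

lemma Finset.exists_subset_card_filter_eq {α β : Type*} [DecidableEq α] [Fintype β]
    [DecidableEq β] (f : α → β) (W : Finset α) (u : β → ℕ)
    (hu : ∀ j, u j ≤ #(W.filter (f · = j))) :
    ∃ S ⊆ W, ∀ j, #(S.filter (f · = j)) = u j := by
  choose T hTW hT using fun j => exists_subset_card_eq (hu j)
  refine ⟨univ.biUnion T, biUnion_subset.2 fun j _ => (hTW j).trans (filter_subset _ _),
    fun j => ?_⟩
  rw [← hT j]
  congr 1
  ext i
  simp only [mem_filter, mem_biUnion, mem_univ, true_and]
  constructor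
  · rintro ⟨⟨k, hk⟩, rfl⟩
    obtain rfl := (mem_filter.1 (hTW k hk)).2
    exact hk
  · exact fun hi => ⟨⟨j, hi⟩, (mem_filter.1 (hTW j hi)).2⟩

lemma Finset.card_filter_sigma_mem_eq_sum {I D : Type*} [Fintype I] [Fintype D] [DecidableEq I]
    [DecidableEq D] (f : I → D → ℕ) (W : Finset I) (x : D) :
    #(univ.filter fun p : Σ i, Σ y, Fin (f i y) => p.1 ∈ W ∧ p.2.1 = x) = ∑ i ∈ W, f i x := by
  have : (univ.filter fun p : Σ i, Σ y, Fin (f i y) => p.1 ∈ W ∧ p.2.1 = x) =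
      W.sigma fun i => ({x} : Finset D).sigma fun _ => univ := by
    ext ⟨i, y, k⟩
    simp [and_comm]
  rw [this, card_sigma]
  simp

namespace SimpleGraph

variable {V : Type*} {G H : SimpleGraph V}

lemma Reachable.eq_of_forall_adj {β : Type*} {f : V → β} (hf : ∀ u v, G.Adj u v → f u = f v)
    {u v : V} (h : G.Reachable u v) : f u = f v := by
  obtain ⟨w⟩ := h
  induction w with
  | nil => rfl
  | cons had _ ih => exact (hf _ _ had).trans ih

lemma Reachable.of_forall_adj_reachable (hHG : ∀ u v, H.Adj u v → G.Reachable u v) {u v : V}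
    (h : H.Reachable u v) : G.Reachable u v := by
  obtain ⟨w⟩ := h
  induction w with
  | nil => rfl
  | cons had _ ih => exact (hHG _ _ had).trans ih

theorem card_connectedComponent_lt [Finite V] (hHG : ∀ u v, H.Adj u v → G.Reachable u v)
    {u v : V} (hG : G.Reachable u v) (hH : ¬H.Reachable u v) :
    Nat.card G.ConnectedComponent < Nat.card H.ConnectedComponent := by
  let φ : H.ConnectedComponent → G.ConnectedComponent :=
    ConnectedComponent.lift G.connectedComponentMk fun v w p _ =>
      ConnectedComponent.sound (p.reachable.of_forall_adj_reachable hHG)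
  have hsurj : Surjective φ := fun c => c.ind fun v => ⟨H.connectedComponentMk v, rfl⟩
  have hninj : ¬Injective φ := fun h =>
    hH (ConnectedComponent.exact (h (ConnectedComponent.sound hG :
      φ (H.connectedComponentMk u) = φ (H.connectedComponentMk v))))
  have := Fintype.ofFinite G.ConnectedComponent
  have := Fintype.ofFinite H.ConnectedComponent
  simpa only [Nat.card_eq_fintype_card] using
    Fintype.card_lt_of_surjective_not_injective φ hsurj hninj

end SimpleGraph

/-- The monomer matrix `M_T` of the paper. -/
def monomerMatrix {D J : Type} (Mty : J → Monomer D) : Matrix D J ℤ :=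
  Matrix.of fun x j => ((Mty j).prim x : ℤ) - (Mty j).star x

lemma abs_monomerMatrix_le {D J : Type} {Mty : J → Monomer D} {a : ℕ}
    (h : ∀ j x, (Mty j).prim x ≤ a ∧ (Mty j).star x ≤ a) (x : D) (j : J) :
    |monomerMatrix Mty x j| ≤ a := by
  have := h j x
  simp only [monomerMatrix, of_apply, abs_le]
  omega

def excess {D I : Type} (mon : I → Monomer D) (W : Finset I) (x : D) : ℤ :=
  ∑ i ∈ W, (((mon i).prim x : ℤ) - (mon i).star x)

lemma excess_comp_eq_mulVec {D I J : Type} [Fintype J] [DecidableEq J] (Mty : J → Monomer D)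
    (f : I → J) (W : Finset I) (x : D) :
    excess (Mty ∘ f) W x = (monomerMatrix Mty *ᵥ fun j => (#(W.filter (f · = j)) : ℤ)) x := by
  simp only [excess, Function.comp_apply]
  rw [← sum_fiberwise' W f fun j => ((Mty j).prim x : ℤ) - (Mty j).star x]
  simp [Matrix.mulVec, dotProduct, monomerMatrix, mul_comm, sub_mul]

lemma excess_filter_notMem_mem_uIcc {D I : Type} [DecidableEq I] (mon : I → Monomer D)
    (P S : Finset I) (x : D)
    (h : excess mon (P.filter (· ∈ S)) x ∈ Set.uIcc 0 (excess mon P x)) :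
    excess mon (P.filter (· ∉ S)) x ∈ Set.uIcc 0 (excess mon P x) := by
  have := sum_filter_add_sum_filter_not P (· ∈ S) fun j => ((mon j).prim x : ℤ) - (mon j).star x
  rw [Set.mem_uIcc] at h ⊢
  unfold excess at *
  omega

namespace Config

variable {D I : Type} {mon : I → Monomer D}

def BondsWithin {κ : Type*} (γ : Config mon) (ℓ : I → κ) : Prop :=
  ∀ p s, γ.bond p = some s → ℓ p.1 = ℓ s.1

def SaturatedWithin {κ : Type*} (γ : Config mon) (ℓ : I → κ) : Prop :=
  ¬∃ (p : PrimInst mon) (s : StarInst mon), p.2.1 = s.2.1 ∧ ℓ p.1 = ℓ s.1 ∧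
    γ.bond p = none ∧ ∀ q, γ.bond q ≠ some s

lemma bondsWithin_connectedComponentMk (α : Config mon) :
    α.BondsWithin α.bindingGraph.connectedComponentMk := fun p s hb => by
  by_cases h : p.1 = s.1
  · rw [h]
  · exact SimpleGraph.ConnectedComponent.sound
      (SimpleGraph.Adj.reachable ⟨h, p, s, hb, Or.inl ⟨rfl, rfl⟩⟩)

lemma BondsWithin.adj {κ : Type*} {γ : Config mon} {ℓ : I → κ} (hγ : γ.BondsWithin ℓ)
    {i j : I} (h : γ.bindingGraph.Adj i j) : ℓ i = ℓ j := by
  obtain ⟨-, p, s, hb, ⟨rfl, rfl⟩ | ⟨rfl, rfl⟩⟩ := h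
  exacts [hγ p s hb, (hγ p s hb).symm]

theorem entropy_lt_of_bondsWithin [Finite I] {κ : Type*} {α β : Config mon} {ℓ : I → κ}
    (hℓ : ∀ i j, ℓ i = ℓ j → α.bindingGraph.Reachable i j) (hβ : β.BondsWithin ℓ) {i j : I}
    (hij : α.bindingGraph.Reachable i j) (hne : ℓ i ≠ ℓ j) : α.entropy < β.entropy :=
  SimpleGraph.card_connectedComponent_lt (fun _ _ h => hℓ _ _ (hβ.adj h)) hij
    fun h => hne (h.eq_of_forall_adj fun _ _ => hβ.adj)

open Classical in
noncomputable def addBond (γ : Config mon) (p : PrimInst mon) (s : StarInst mon)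
    (hs : ∀ q, γ.bond q ≠ some s) (hx : p.2.1 = s.2.1) : Config mon where
  bond := update γ.bond p (some s)
  inj q q' s' hq hq' := by
    by_cases h : q = p <;> by_cases h' : q' = p
    · rw [h, h']
    · subst h
      rw [update_self, Option.some_inj] at hq
      rw [update_of_ne h', ← hq] at hq'
      exact absurd hq' (hs q')
    · subst h'
      rw [update_self, Option.some_inj] at hq'
      rw [update_of_ne h, ← hq'] at hq
      exact absurd hq (hs q)
    · rw [update_of_ne h] at hq
      rw [update_of_ne h'] at hq'
      exact γ.inj q q' s' hq hq'
  compat q s' h := by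
    by_cases hq : q = p
    · subst hq
      rw [update_self, Option.some_inj] at h
      rw [← h, hx]
    · rw [update_of_ne hq] at h
      exact γ.compat q s' h

variable [Fintype I]

open Classical in
noncomputable def polymer (α : Config mon) (C : α.bindingGraph.ConnectedComponent) : Finset I :=
  univ.filter (α.bindingGraph.connectedComponentMk · = C)

lemma polymerSize_eq_card (α : Config mon) (C : α.bindingGraph.ConnectedComponent) :
    α.polymerSize C = #(α.polymer C) := by
  classical
  simp [polymerSize, polymer, Nat.card_eq_fintype_card, Fintype.card_subtype]

lemma BondsWithin.mem_filter_iff {κ : Type*} [DecidableEq κ] {γ : Config mon} {ℓ : I → κ}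
    (hγ : γ.BondsWithin ℓ) (L : κ) {p : PrimInst mon} {s : StarInst mon}
    (hb : γ.bond p = some s) : p.1 ∈ univ.filter (ℓ · = L) ↔ s.1 ∈ univ.filter (ℓ · = L) := by
  simp [hγ p s hb]

lemma mem_polymer_iff (α : Config mon) (C : α.bindingGraph.ConnectedComponent)
    {p : PrimInst mon} {s : StarInst mon} (hb : α.bond p = some s) :
    p.1 ∈ α.polymer C ↔ s.1 ∈ α.polymer C := by
  classical
  exact α.bondsWithin_connectedComponentMk.mem_filter_iff C hb

variable [Fintype D]

instance : Fintype (PrimInst mon) := inferInstanceAs (Fintype (Σ i, Σ x, Fin ((mon i).prim x)))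

instance : Fintype (StarInst mon) := inferInstanceAs (Fintype (Σ i, Σ x, Fin ((mon i).star x)))

open Classical in
noncomputable def unboundPrims (γ : Config mon) (W : Finset I) (x : D) : Finset (PrimInst mon) :=
  univ.filter fun p => p.1 ∈ W ∧ p.2.1 = x ∧ γ.bond p = none

open Classical in
noncomputable def unboundStars (γ : Config mon) (W : Finset I) (x : D) : Finset (StarInst mon) :=
  univ.filter fun s => s.1 ∈ W ∧ s.2.1 = x ∧ ∀ q, γ.bond q ≠ some s

/-- In a part of the collection that no bond leaves, the bonds pair off the bound primary and
complementary instances of each type, so the excess is carried by the unbound ones. -/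
theorem excess_eq_card_unboundPrims_sub (γ : Config mon) (W : Finset I)
    (hW : ∀ p s, γ.bond p = some s → (p.1 ∈ W ↔ s.1 ∈ W)) (x : D) :
    excess mon W x = #(γ.unboundPrims W x) - #(γ.unboundStars W x) := by
  classical
  set P := univ.filter fun p : PrimInst mon => p.1 ∈ W ∧ p.2.1 = x
  set S := univ.filter fun s : StarInst mon => s.1 ∈ W ∧ s.2.1 = x
  have hP : #P = ∑ i ∈ W, (mon i).prim x := card_filter_sigma_mem_eq_sum _ W x
  have hS : #S = ∑ i ∈ W, (mon i).star x := card_filter_sigma_mem_eq_sum _ W x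
  have hPu : P.filter (γ.bond · = none) = γ.unboundPrims W x := by
    ext p; simp [P, unboundPrims, and_assoc]
  have hSu : S.filter (fun s => ¬∃ q, γ.bond q = some s) = γ.unboundStars W x := by
    ext s; simp [S, unboundStars, and_assoc]
  have hbound : #(P.filter fun p => ¬γ.bond p = none) =
      #(S.filter fun s => ∃ q, γ.bond q = some s) := by
    refine card_bij (fun p hp => (γ.bond p).get (Option.isSome_iff_ne_none.2
      (mem_filter.1 hp).2)) (fun p hp => ?_) (fun p hp q hq h => ?_) (fun s hs => ?_)
    · have hb := Option.some_get (Option.isSome_iff_ne_none.2 (mem_filter.1 hp).2)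
      obtain ⟨hpW, hpx⟩ := (mem_filter.1 (mem_filter.1 hp).1).2
      simp only [S, mem_filter, mem_univ, true_and]
      exact ⟨⟨(hW _ _ hb.symm).1 hpW, (γ.compat _ _ hb.symm) ▸ hpx⟩, p, hb.symm⟩
    · have hp' := (Option.some_get (Option.isSome_iff_ne_none.2 (mem_filter.1 hp).2)).symm
      have hq' := (Option.some_get (Option.isSome_iff_ne_none.2 (mem_filter.1 hq).2)).symm
      rw [← h] at hq'
      exact γ.inj p q _ hp' hq'
    · obtain ⟨⟨hsW, hsx⟩, q, hq⟩ := by simpa [S] using hs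
      refine ⟨q, ?_, by simp [hq]⟩
      simp only [P, mem_filter, mem_univ, true_and, hq, reduceCtorEq, not_false_eq_true,
        and_true]
      exact ⟨(hW _ _ hq).2 hsW, (γ.compat _ _ hq).trans hsx⟩
  have h1 := card_filter_add_card_filter_not (s := P) (γ.bond · = none)
  have h2 := card_filter_add_card_filter_not (s := S) fun s => ∃ q, γ.bond q = some s
  simp only [hPu, hSu] at h1 h2
  have hex : excess mon W x = (#P : ℤ) - #S := by
    simp only [excess, sum_sub_distrib, hP, hS, Nat.cast_sum]
  omega

lemma SaturatedWithin.excess_pos {κ : Type*} [DecidableEq κ] {β : Config mon} {ℓ : I → κ}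
    (hsat : β.SaturatedWithin ℓ) (hβ : β.BondsWithin ℓ) {p : PrimInst mon}
    (hp : β.bond p = none) : 0 < excess mon (univ.filter (ℓ · = ℓ p.1)) p.2.1 := by
  have h0 : #(β.unboundStars (univ.filter (ℓ · = ℓ p.1)) p.2.1) = 0 :=
    card_eq_zero.2 (eq_empty_of_forall_notMem fun s hs => by
      simp only [unboundStars, mem_filter, mem_univ, true_and] at hs
      exact hsat ⟨p, s, hs.2.1.symm, hs.1.symm, hp, hs.2.2⟩)
  have h1 := card_pos.2 ⟨p, (by simp [unboundPrims, hp] :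
    p ∈ β.unboundPrims (univ.filter (ℓ · = ℓ p.1)) p.2.1)⟩
  rw [excess_eq_card_unboundPrims_sub β _ fun _ _ => hβ.mem_filter_iff _]
  omega

lemma SaturatedWithin.excess_neg {κ : Type*} [DecidableEq κ] {β : Config mon} {ℓ : I → κ}
    (hsat : β.SaturatedWithin ℓ) (hβ : β.BondsWithin ℓ) {s : StarInst mon}
    (hs : ∀ q, β.bond q ≠ some s) : excess mon (univ.filter (ℓ · = ℓ s.1)) s.2.1 < 0 := by
  have h0 : #(β.unboundPrims (univ.filter (ℓ · = ℓ s.1)) s.2.1) = 0 :=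
    card_eq_zero.2 (eq_empty_of_forall_notMem fun p hp => by
      simp only [unboundPrims, mem_filter, mem_univ, true_and] at hp
      exact hsat ⟨p, s, hp.2.1, hp.1, hp.2.2, hs⟩)
  have h1 := card_pos.2 ⟨s, (by simp [unboundStars, hs] :
    s ∈ β.unboundStars (univ.filter (ℓ · = ℓ s.1)) s.2.1)⟩
  rw [excess_eq_card_unboundPrims_sub β _ fun _ _ => hβ.mem_filter_iff _]
  omega

/-- An unbound pair of `β` would come from a polymer of `α` of positive and one of negative excess
in the same domain type, and these carry unbound instances already in `α`. -/
theorem saturated_of_saturatedWithin {κ : Type*} [DecidableEq κ] {α β : Config mon}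
    (hα : α.Saturated) {ℓ : I → κ} (hβ : β.BondsWithin ℓ) (hβsat : β.SaturatedWithin ℓ)
    (hex : ∀ i x, excess mon (univ.filter (ℓ · = ℓ i)) x ∈
      Set.uIcc 0 (excess mon (α.polymer (α.bindingGraph.connectedComponentMk i)) x)) :
    β.Saturated := by
  rintro ⟨p, s, hx, hp, hs⟩
  obtain ⟨p', hp'⟩ : (α.unboundPrims (α.polymer (α.bindingGraph.connectedComponentMk p.1))
      p.2.1).Nonempty := by
    have := excess_eq_card_unboundPrims_sub α
      (α.polymer (α.bindingGraph.connectedComponentMk p.1)) (fun _ _ => α.mem_polymer_iff _) p.2.1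
    have := hβsat.excess_pos hβ hp
    rcases Set.mem_uIcc.1 (hex p.1 p.2.1) with h | h <;> exact card_pos.1 (by omega)
  obtain ⟨s', hs'⟩ : (α.unboundStars (α.polymer (α.bindingGraph.connectedComponentMk s.1))
      s.2.1).Nonempty := by
    have := excess_eq_card_unboundPrims_sub α
      (α.polymer (α.bindingGraph.connectedComponentMk s.1)) (fun _ _ => α.mem_polymer_iff _) s.2.1
    have := hβsat.excess_neg hβ hs
    rcases Set.mem_uIcc.1 (hex s.1 s.2.1) with h | h <;> exact card_pos.1 (by omega)
  simp only [unboundPrims, unboundStars, mem_filter] at hp' hs'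
  exact hα ⟨p', s', hp'.2.2.1.trans (hx.trans hs'.2.2.1.symm), hp'.2.2.2, hs'.2.2.2⟩

theorem exists_bondsWithin_saturatedWithin {κ : Type*} (ℓ : I → κ) :
    ∃ β : Config mon, β.BondsWithin ℓ ∧ β.SaturatedWithin ℓ := by
  classical
  have : Finite (Config mon) := Finite.of_injective Config.bond fun β β' h => by
    cases β; cases β'; cases h; rfl
  have : Nonempty {β : Config mon // β.BondsWithin ℓ} :=
    ⟨⟨⟨fun _ => none, by simp, by simp⟩, by simp [BondsWithin]⟩⟩
  -- a maximum matching within the classes of `ℓ`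
  obtain ⟨⟨β, hβ⟩, hmax⟩ := Finite.exists_max fun β : {β : Config mon // β.BondsWithin ℓ} =>
    #(univ.filter fun p => β.1.bond p ≠ none)
  refine ⟨β, hβ, fun ⟨p, s, hx, hℓ, hp, hs⟩ => ?_⟩
  have hβ' : (β.addBond p s hs hx).BondsWithin ℓ := fun q s' h => by
    by_cases hq : q = p
    · subst hq
      simp only [addBond, update_self, Option.some_inj] at h
      rwa [← h]
    · exact hβ q s' (by simpa [addBond, hq] using h)
  refine absurd (hmax ⟨_, hβ'⟩) (not_le.2 (card_lt_card ?_))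
  refine (ssubset_iff_of_subset fun q hq => ?_).2 ⟨p, ?_, by simp [hp]⟩
  · simp only [mem_filter, mem_univ, true_and] at hq ⊢
    by_cases h : q = p
    · simp [h, addBond]
    · simpa [addBond, h] using hq
  · simp only [mem_filter, mem_univ, true_and]
    simp [addBond]

/-- Rematching the two parts of a split polymer separately is saturated and has one more polymer
than `α`, unless the split separates a positive from a negative excess of some domain type. -/
theorem IsStable.exists_excess_notMem_uIcc {α : Config mon} (hα : α.IsStable)
    {C : α.bindingGraph.ConnectedComponent} {S : Finset I} (hSC : S ⊆ α.polymer C)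
    (hS : S.Nonempty) (hSC' : S ≠ α.polymer C) :
    ∃ x, excess mon S x ∉ Set.uIcc 0 (excess mon (α.polymer C) x) := by
  classical
  by_contra! hsplit
  let ℓ : I → Bool × α.bindingGraph.ConnectedComponent :=
    fun i => (decide (i ∈ S), α.bindingGraph.connectedComponentMk i)
  obtain ⟨β, hβ, hβsat⟩ := exists_bondsWithin_saturatedWithin (mon := mon) ℓ
  have hex : ∀ i x, excess mon (univ.filter (ℓ · = ℓ i)) x ∈
      Set.uIcc 0 (excess mon (α.polymer (α.bindingGraph.connectedComponentMk i)) x) := by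
    intro i x
    set P := α.polymer (α.bindingGraph.connectedComponentMk i)
    have hin : excess mon (P.filter (· ∈ S)) x ∈ Set.uIcc 0 (excess mon P x) := by
      by_cases hi : α.bindingGraph.connectedComponentMk i = C
      · rw [show P = α.polymer C by rw [← hi], filter_mem_eq_inter, inter_eq_right.2 hSC]
        exact hsplit x
      · rw [filter_false_of_mem fun j hj hjS => hi ?_]
        · simp [excess]
        · rw [← (mem_filter.1 (hSC hjS)).2]; exact ((mem_filter.1 hj).2).symm
    have hcls : univ.filter (ℓ · = ℓ i) = P.filter fun j => (j ∈ S ↔ i ∈ S) := by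
      ext j; simp [P, ℓ, polymer, and_comm]
    by_cases hiS : i ∈ S
    · simpa [hcls, hiS] using hin
    · simpa [hcls, hiS] using excess_filter_notMem_mem_uIcc mon P S x hin
  obtain ⟨i, hi⟩ := hS
  obtain ⟨j, hjC, hjS⟩ := not_subset.1 fun h => hSC' (subset_antisymm hSC h)
  have hij : α.bindingGraph.Reachable i j := SimpleGraph.ConnectedComponent.exact
    (((mem_filter.1 (hSC hi)).2).trans (mem_filter.1 hjC).2.symm)
  have hlt := entropy_lt_of_bondsWithin (ℓ := ℓ)
    (fun i j h => SimpleGraph.ConnectedComponent.exact (Prod.ext_iff.1 h).2) hβ hij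
    (by simp [ℓ, hi, hjS])
  exact absurd (hα.2 β (saturated_of_saturatedWithin hα.1 hβ hβsat hex)) (not_le.2 hlt)

end Config

theorem Config.IsStable.exists_mulVec_notMem_uIcc {D I J : Type} [Fintype D] [Fintype I]
    [Fintype J] [DecidableEq J] {Mty : J → Monomer D} {f : I → J} {α : Config (Mty ∘ f)}
    (hα : α.IsStable) (C : α.bindingGraph.ConnectedComponent) (u : J → ℕ)
    (hu : ∀ j, u j ≤ #((α.polymer C).filter (f · = j))) (hu0 : u ≠ 0)
    (huv : u ≠ fun j => #((α.polymer C).filter (f · = j))) :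
    ∃ x, (monomerMatrix Mty *ᵥ fun j => (u j : ℤ)) x ∉
      Set.uIcc 0 ((monomerMatrix Mty *ᵥ fun j => (#((α.polymer C).filter (f · = j)) : ℤ)) x) := by
  classical
  obtain ⟨S, hSW, hS⟩ := exists_subset_card_filter_eq f (α.polymer C) u hu
  obtain ⟨j, hj⟩ := Function.ne_iff.1 hu0
  obtain ⟨x, hx⟩ := hα.exists_excess_notMem_uIcc hSW
    ((card_pos.1 (by rw [hS]; exact Nat.pos_of_ne_zero hj)).mono (filter_subset _ _))
    (fun h => huv (funext fun j => by rw [← hS, h]))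
  exact ⟨x, by simpa only [excess_comp_eq_mulVec, hS] using hx⟩

theorem stmt1_general (D : Type) [Fintype D] (d m a : ℕ) (hd : Fintype.card D = d)
    (Mty : Fin m → Monomer D)
    (hne : ∀ j, ∃ x, 0 < (Mty j).prim x + (Mty j).star x)
    (ha : a = Finset.univ.sup fun j : Fin m =>
      Finset.univ.sup fun x : D => max ((Mty j).prim x) ((Mty j).star x))
    (c : Fin m → ℕ)
    (α : Config (fun i : (Σ j : Fin m, Fin (c j)) => Mty i.1))
    (hα : α.IsStable)
    (C : α.bindingGraph.ConnectedComponent) :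
    α.polymerSize C ≤ 2 * (m + d) * (a * d) ^ (2 * d + 3) := by
  classical
  have hle : ∀ j x, (Mty j).prim x ≤ a ∧ (Mty j).star x ≤ a := fun j x => by
    rw [← max_le_iff, ha]
    exact (le_sup (f := fun x => max ((Mty j).prim x) ((Mty j).star x)) (mem_univ x)).trans
      (le_sup (f := fun j : Fin m => univ.sup fun x => max ((Mty j).prim x) ((Mty j).star x))
        (mem_univ j))
  obtain ⟨i₀, -⟩ := C.exists_rep
  obtain ⟨x₀, hx₀⟩ := hne i₀.1
  have hd1 : 1 ≤ d := hd ▸ Fintype.card_pos_iff.2 ⟨x₀⟩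
  have ha1 : 1 ≤ a := by have := hle i₀.1 x₀; omega
  rw [Config.polymerSize_eq_card]
  by_contra! hbig
  have hv : (Fintype.card (Fin m) + d) * ((d + 1) * ((a * (d + 1)) ^ d - 1)) <
      ∑ j, #((α.polymer C).filter (·.1 = j)) := by
    rw [← card_eq_sum_card_fiberwise fun i _ => mem_univ i.1, Fintype.card_fin]
    calc _ ≤ (m + d) * (2 * (a * d) ^ (2 * d + 3)) :=
          Nat.mul_le_mul_left _ (succ_mul_pow_sub_one_le ha1 hd1)
      _ < _ := by rw [← mul_assoc, mul_comm (m + d)]; exact hbig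
  obtain ⟨u, hu, hu0, huv, hbox⟩ := (monomerMatrix Mty).exists_nat_le_mulVec_mem_uIcc hd hd1 ha1
    (abs_monomerMatrix_le hle) _ hv
  obtain ⟨x, hx⟩ := Config.IsStable.exists_mulVec_notMem_uIcc (Mty := Mty) (f := Sigma.fst) hα C
    u hu hu0 huv
  exact hx (hbox x)

/-- In a TBN with `d` primary domain types, `m` monomer types
(each a nonempty multiset of domains), and `a` the maximum number of instances
of any single domain type (primary or complementary) in any monomer type, every
polymer of every stable configuration of every monomer collection has size at
most `2 (m + d) (ad)^(2d+3)`. -/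
theorem stmt1 (D : Type) [Fintype D] (d m a : ℕ) (hd : Fintype.card D = d)
    (Mty : Fin m → Monomer D) (hinj : Function.Injective Mty)
    (hne : ∀ j, ∃ x, 0 < (Mty j).prim x + (Mty j).star x)
    (ha : a = Finset.univ.sup fun j : Fin m =>
      Finset.univ.sup fun x : D => max ((Mty j).prim x) ((Mty j).star x))
    (c : Fin m → ℕ)
    (α : Config (fun i : (Σ j : Fin m, Fin (c j)) => Mty i.1))
    (hα : α.IsStable)
    (C : α.bindingGraph.ConnectedComponent) :
    α.polymerSize C ≤ 2 * (m + d) * (a * d) ^ (2 * d + 3) :=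
  stmt1_general D d m a hd Mty hne ha c α hα C
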